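/- arXiv:1902.00827 — 10 statements merged into one kernel-verified Lean document; each statement's English description precedes it below -/
import Mathlib

section
/- If a nonempty subset X ⊆ T is dominant with respect to a nonempty subset C ⊆ I, then X = { min_i X : i ∈ C }. -/
/-- `X ⊆ T` is dominant with respect to `C ⊆ I` (for the family of linear orders `o`)
if either `X = ∅`, or `X ≠ ∅` and there is no `y : T` with `min_i X <_i y` for all `i ∈ C`. -/
def Dominant {T I : Type*} (o : I → LinearOrder T) (X : Finset T) (C : Finset I) : Prop :=
  ∀ hX : X.Nonempty, ¬ ∃ y : T, ∀ i ∈ C, (o i).lt (@Finset.min' T (o i) X hX) y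

section MinImage

variable {T I : Type*} [DecidableEq T] (o : I → LinearOrder T) {X : Finset T} (C : Finset I)

theorem image_min'_subset (hX : X.Nonempty) :
    C.image (fun i => @Finset.min' T (o i) X hX) ⊆ X := by
  intro x hx
  obtain ⟨i, -, rfl⟩ := Finset.mem_image.mp hx
  exact @Finset.min'_mem T (o i) X hX

theorem min'_lt_of_notMem_image_min' (hX : X.Nonempty) {x : T} (hx : x ∈ X)
    (hmin : x ∉ C.image (fun i => @Finset.min' T (o i) X hX)) :
    ∀ i ∈ C, (o i).lt (@Finset.min' T (o i) X hX) x := by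
  intro i hi
  let _ := o i
  exact lt_of_le_of_ne (Finset.min'_le X x hx) fun h => hmin (Finset.mem_image.mpr ⟨i, hi, h⟩)

variable {o C}

theorem Dominant.subset_image_min' (hdom : Dominant o X C) (hX : X.Nonempty) :
    X ⊆ C.image (fun i => @Finset.min' T (o i) X hX) := by
  intro x hx
  by_contra hmin
  exact hdom hX ⟨x, min'_lt_of_notMem_image_min' o C hX hx hmin⟩

end MinImage

theorem stmt1_general {T I : Type*}
    [DecidableEq T] (o : I → LinearOrder T)
    (X : Finset T) (C : Finset I) (hX : X.Nonempty)
    (hdom : Dominant o X C) :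
    X = C.image (fun i => @Finset.min' T (o i) X hX) :=
  (hdom.subset_image_min' hX).antisymm (image_min'_subset o C hX)

/-- If a nonempty `X ⊆ T` is dominant with respect to a nonempty `C ⊆ I`,
then `X = { min_i X : i ∈ C }`. -/
theorem stmt1 {T I : Type*} [Fintype T] [Fintype I] [Nonempty T] [Nonempty I]
    [DecidableEq T] [DecidableEq I] (o : I → LinearOrder T)
    (X : Finset T) (C : Finset I) (hX : X.Nonempty) (hC : C.Nonempty)
    (hdom : Dominant o X C) :
    X = C.image (fun i => @Finset.min' T (o i) X hX) :=
  stmt1_general o X C hX hdom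
end

section
/- If (X, C) is a cell, then |C| = |X| or |C| = |X| + 1. -/
/-- A pair `(X, C)` is a cell if `C ≠ ∅`, `X` is dominant with respect to `C`,
and `|C \ c(X)| ≤ 1`. -/
def IsCell {T I : Type*} [DecidableEq T] [DecidableEq I]
    (o : I → LinearOrder T) (c : T → I) (X : Finset T) (C : Finset I) : Prop :=
  C.Nonempty ∧ Dominant o X C ∧ (C \ X.image c).card ≤ 1

/-- A 0-cell is a cell `(X, C)` with `|C| = |X|`. -/
def IsZeroCell {T I : Type*} [DecidableEq T] [DecidableEq I]
    (o : I → LinearOrder T) (c : T → I) (X : Finset T) (C : Finset I) : Prop :=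
  IsCell o c X C ∧ C.card = X.card

/-- A 1-cell is a cell `(X, C)` with `|C| = |X| + 1`. -/
def IsOneCell {T I : Type*} [DecidableEq T] [DecidableEq I]
    (o : I → LinearOrder T) (c : T → I) (X : Finset T) (C : Finset I) : Prop :=
  IsCell o c X C ∧ C.card = X.card + 1

/-- A 1-cell `(Y, D)` is a face of a 0-cell `(X, C)` if either `D = C` and
`Y = X \ {x}` for some `x ∈ X`, or `Y = X` and `D = C ∪ {i}` for some `i ∉ C`. -/
def IsFace {T I : Type*} [DecidableEq T] [DecidableEq I]
    (o : I → LinearOrder T) (c : T → I)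
    (Y : Finset T) (D : Finset I) (X : Finset T) (C : Finset I) : Prop :=
  IsOneCell o c Y D ∧ IsZeroCell o c X C ∧
    ((D = C ∧ ∃ x ∈ X, Y = X.erase x) ∨ (Y = X ∧ ∃ i, i ∉ C ∧ D = insert i C))

/-!
The upper bound is pure counting: all colours of `C` but at most one are colours of elements of
`X`. For the lower bound, dominance says that every `x ∈ X` is `min_i X` for some `i ∈ C` (otherwise
`x` itself would lie strictly above every `min_i X`), so `X` is covered by the `|C|` minima.
-/

theorem Finset.card_le_card_add_one_of_card_sdiff_image_le_one {α β : Type*} [DecidableEq β]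
    {f : α → β} {s : Finset α} {t : Finset β} (h : (t \ s.image f).card ≤ 1) :
    t.card ≤ s.card + 1 :=
  calc t.card ≤ (t \ s.image f).card + (s.image f).card := card_le_card_sdiff_add_card
    _ ≤ 1 + s.card := Nat.add_le_add h card_image_le
    _ = s.card + 1 := Nat.add_comm _ _

namespace Dominant

variable {T I : Type*} {o : I → LinearOrder T} {X : Finset T} {C : Finset I}

theorem exists_min'_eq (hdom : Dominant o X C) (hX : X.Nonempty) {x : T} (hx : x ∈ X) :
    ∃ i ∈ C, @Finset.min' T (o i) X hX = x := by
  by_contra! hne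
  refine hdom hX ⟨x, fun i hi => ?_⟩
  let := o i
  exact (X.min'_le x hx).lt_of_ne (hne i hi)

theorem card_le [DecidableEq T] (hdom : Dominant o X C) : X.card ≤ C.card := by
  rcases X.eq_empty_or_nonempty with rfl | hX
  · exact Nat.zero_le _
  have hcover : X ⊆ C.image fun i => @Finset.min' T (o i) X hX := fun x hx => by
    simpa only [Finset.mem_image] using hdom.exists_min'_eq hX hx
  exact (Finset.card_le_card hcover).trans Finset.card_image_le

end Dominant

theorem stmt3_general {T I : Type*}
    [DecidableEq T] [DecidableEq I] (o : I → LinearOrder T) (c : T → I)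
    (X : Finset T) (C : Finset I) (hcell : IsCell o c X C) :
    C.card = X.card ∨ C.card = X.card + 1 := by
  obtain ⟨-, hdom, hcard⟩ := hcell
  have hlower := hdom.card_le
  have hupper := Finset.card_le_card_add_one_of_card_sdiff_image_le_one hcard
  omega

/-- If `(X, C)` is a cell, then `|C| = |X|` or `|C| = |X| + 1`. -/
theorem stmt3 {T I : Type*} [Fintype T] [Fintype I] [Nonempty T] [Nonempty I]
    [DecidableEq T] [DecidableEq I] (o : I → LinearOrder T) (c : T → I)
    (X : Finset T) (C : Finset I) (hcell : IsCell o c X C) :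
    C.card = X.card ∨ C.card = X.card + 1 :=
  stmt3_general o c X C hcell
end

section
/- Let (X, C) be a balanced 0-cell. Then for every x ∈ X the pair (X \ {x}, C) is a face of (X, C), for every i ∈ I \ C the pair (X, C ∪ {i}) is a face of (X, C), and for every color i ∈ I the 0-cell (X, C) has exactly one face of type i. -/
lemma dominant_erase {T I : Type*} [DecidableEq T] (o : I → LinearOrder T)
    (X : Finset T) (C : Finset I) (h : Dominant o X C) (x : T) :
    Dominant o (X.erase x) C := by
  intro hne hy
  obtain ⟨y, hy⟩ := hy
  have hX : X.Nonempty := hne.mono (Finset.erase_subset x X)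
  refine h hX ⟨y, fun i hi => ?_⟩
  have hmem : (@Finset.min' T (o i) (X.erase x) hne) ∈ X :=
    Finset.mem_of_mem_erase (@Finset.min'_mem T (o i) _ hne)
  have h1 : (o i).le (@Finset.min' T (o i) X hX) (@Finset.min' T (o i) (X.erase x) hne) :=
    @Finset.min'_le T (o i) X _ hmem
  exact @lt_of_le_of_lt T (o i).toPreorder _ _ _ h1 (hy i hi)

lemma dominant_mono {T I : Type*} (o : I → LinearOrder T)
    (X : Finset T) (C D : Finset I) (h : Dominant o X C) (hCD : C ⊆ D) :
    Dominant o X D :=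
  fun hX ⟨y, hy⟩ => h hX ⟨y, fun i hi => hy i (hCD hi)⟩

/-- Let `(X, C)` be a balanced 0-cell. Then every `(X \ {x}, C)` with `x ∈ X` and
every `(X, C ∪ {i})` with `i ∉ C` is a face of `(X, C)`, and for every color `i`
the cell `(X, C)` has exactly one face of type `i`. -/
theorem stmt7 {T I : Type*} [Fintype T] [Fintype I] [Nonempty T] [Nonempty I]
    [DecidableEq T] [DecidableEq I] (o : I → LinearOrder T) (c : T → I)
    (X : Finset T) (C : Finset I) (h0 : IsZeroCell o c X C)
    (hb : C = X.image c) :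
    (∀ x ∈ X, IsFace o c (X.erase x) C X C) ∧
    (∀ i : I, i ∉ C → IsFace o c X (insert i C) X C) ∧
    (∀ i : I, ∃! p : Finset T × Finset I,
        IsFace o c p.1 p.2 X C ∧ p.2 \ p.1.image c = {i}) := by
  obtain ⟨⟨hC, hdom, hcard1⟩, hcard⟩ := h0
  have h0' : IsZeroCell o c X C := ⟨⟨hC, hdom, hcard1⟩, hcard⟩
  have hinj : Set.InjOn c ↑X := by
    refine Finset.card_image_iff.mp ?_
    rw [← hb]; exact hcard
  have himg : ∀ x ∈ X, C \ (X.erase x).image c = {c x} := by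
    intro x hx
    ext j
    simp only [Finset.mem_sdiff, hb, Finset.mem_image, Finset.mem_singleton,
      Finset.mem_erase, not_exists, not_and]
    constructor
    · rintro ⟨⟨a, ha, rfl⟩, h2⟩
      by_contra hne
      exact h2 a ⟨fun hax => hne (hax ▸ rfl), ha⟩ rfl
    · rintro rfl
      refine ⟨⟨x, hx, rfl⟩, ?_⟩
      rintro a ⟨hax, ha⟩ hca
      exact hax (hinj ha hx hca)
  have face1 : ∀ x ∈ X, IsFace o c (X.erase x) C X C := by
    intro x hx
    refine ⟨⟨⟨hC, dominant_erase o X C hdom x, ?_⟩, ?_⟩, h0', Or.inl ⟨rfl, x, hx, rfl⟩⟩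
    · rw [himg x hx]; simp
    · rw [hcard, ← Finset.card_erase_add_one hx]
  have himg2 : ∀ i ∉ C, insert i C \ X.image c = {i} := by
    intro i hi
    rw [← hb]
    exact Finset.insert_sdiff_cancel hi
  have face2 : ∀ i ∉ C, IsFace o c X (insert i C) X C := by
    intro i hi
    refine ⟨⟨⟨Finset.insert_nonempty i C,
      dominant_mono o X C _ hdom (Finset.subset_insert i C), ?_⟩, ?_⟩, h0',
      Or.inr ⟨rfl, i, hi, rfl⟩⟩
    · rw [himg2 i hi]; simp
    · rw [Finset.card_insert_of_notMem hi, hcard]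
  refine ⟨face1, face2, fun i => ?_⟩
  by_cases hiC : i ∈ C
  · obtain ⟨x, hx, hcx⟩ := Finset.mem_image.mp (hb ▸ hiC)
    refine ⟨(X.erase x, C), ⟨face1 x hx, by rw [himg x hx, hcx]⟩, ?_⟩
    rintro ⟨Y, D⟩ ⟨⟨_, _, hF⟩, htype⟩
    rcases hF with ⟨hDC, x', hx', hY⟩ | ⟨hY, j, hj, hD⟩
    · subst hY; rw [hDC, himg x' hx'] at htype
      have h1 : c x' = i := Finset.singleton_inj.mp htype
      have h2 : x' = x := hinj hx' hx (h1.trans hcx.symm)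
      rw [h2]
      exact Prod.ext rfl hDC
    · subst hY; subst hD
      rw [himg2 j hj] at htype
      have h1 : j = i := Finset.singleton_inj.mp htype
      exact absurd (h1 ▸ hiC) hj
  · refine ⟨(X, insert i C), ⟨face2 i hiC, himg2 i hiC⟩, ?_⟩
    rintro ⟨Y, D⟩ ⟨⟨_, _, hF⟩, htype⟩
    rcases hF with ⟨hDC, x', hx', hY⟩ | ⟨hY, j, hj, hD⟩
    · subst hY; rw [hDC, himg x' hx'] at htype
      have h1 : c x' = i := Finset.singleton_inj.mp htype
      have hmem : c x' ∈ C := by rw [hb]; exact Finset.mem_image_of_mem c hx'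
      exact (hiC (h1 ▸ hmem)).elim
    · subst hY; subst hD
      rw [himg2 j hj] at htype
      have h1 : j = i := Finset.singleton_inj.mp htype
      rw [h1]
end

section
/- A 1-cell of the form (∅, D) is a face of exactly one 0-cell, namely ({x}, D) where D = {i} and x is the maximal element of T with respect to <_i; moreover, if this 0-cell is not balanced, then its type equals the type of (∅, D). -/
/-! A face of `(∅, D)` cannot arise by adding a colour, since a 0-cell with no points would have
no colours; so it arises by removing the single point `x` of a 0-cell `({x}, D)`. For `D = {i}`,
dominance of `{x}` says exactly that no `y` lies `<_i`-above `x`, i.e. `x` is the `<_i`-maximum. -/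

open Finset

section Cells

variable {T I : Type*}

theorem dominant_empty (o : I → LinearOrder T) (C : Finset I) : Dominant o ∅ C :=
  fun h => absurd h not_nonempty_empty

theorem dominant_singleton_iff (o : I → LinearOrder T) (x : T) (C : Finset I) :
    Dominant o {x} C ↔ ¬ ∃ y, ∀ j ∈ C, (o j).lt x y := by
  have hmin : ∀ j, @min' T (o j) {x} (singleton_nonempty x) = x :=
    fun j => @min'_singleton T (o j) x
  simp only [Dominant, hmin, singleton_nonempty, forall_const]

theorem dominant_singleton_singleton_iff [Fintype T] [Nonempty T] (o : I → LinearOrder T)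
    (x : T) (i : I) :
    Dominant o {x} {i} ↔ x = @max' T (o i) univ univ_nonempty := by
  let _ := o i
  rw [dominant_singleton_iff]
  simp only [mem_singleton, forall_eq, not_exists]
  refine ⟨fun h => ?_, fun h y => h ▸ not_lt_of_ge (le_max' _ y (mem_univ y))⟩
  exact le_antisymm (le_max' _ x (mem_univ x)) (not_lt.mp (h _))

variable [DecidableEq T] [DecidableEq I] (o : I → LinearOrder T) (c : T → I)

theorem isOneCell_empty_singleton (i : I) : IsOneCell o c ∅ {i} :=
  ⟨⟨singleton_nonempty i, dominant_empty o _, by simp⟩, by simp⟩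

theorem not_isZeroCell_empty (C : Finset I) : ¬ IsZeroCell o c ∅ C := fun ⟨⟨hC, _⟩, hcard⟩ =>
  hC.ne_empty (card_eq_zero.mp hcard)

theorem isZeroCell_singleton_singleton_iff [Fintype T] [Nonempty T] (x : T) (i : I) :
    IsZeroCell o c {x} {i} ↔ x = @max' T (o i) univ univ_nonempty := by
  rw [← dominant_singleton_singleton_iff]
  refine ⟨fun h => h.1.2.1, fun h => ⟨⟨singleton_nonempty i, h, ?_⟩, by simp⟩⟩
  exact (card_le_card sdiff_subset).trans (card_singleton i).le

theorem isFace_empty_iff (D : Finset I) (X : Finset T) (C : Finset I) :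
    IsFace o c ∅ D X C ↔ IsOneCell o c ∅ D ∧ C = D ∧ ∃ x, X = {x} ∧ IsZeroCell o c {x} D := by
  constructor
  · rintro ⟨hD, hXC, ⟨rfl, x, hx, hXx⟩ | ⟨rfl, -⟩⟩
    · have hX : X = {x} :=
        ((erase_eq_empty_iff X x).mp hXx.symm).resolve_left (ne_empty_of_mem hx)
      exact ⟨hD, rfl, x, hX, hX ▸ hXC⟩
    · exact absurd hXC (not_isZeroCell_empty o c C)
  · rintro ⟨hD, rfl, x, rfl, hx⟩
    exact ⟨hD, hx, Or.inl ⟨rfl, x, mem_singleton_self x, by simp⟩⟩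

end Cells

theorem stmt8_general {T I : Type*} [Fintype T] [Nonempty T]
    [DecidableEq T] [DecidableEq I] (o : I → LinearOrder T) (c : T → I)
    (D : Finset I) (i : I) (hD : D = {i}) :
    (∀ X C, IsFace o c ∅ D X C ↔
        (X = {@Finset.max' T (o i) Finset.univ Finset.univ_nonempty} ∧ C = D)) ∧
    (D ≠ Finset.image c {@Finset.max' T (o i) Finset.univ Finset.univ_nonempty} →
        D \ Finset.image c {@Finset.max' T (o i) Finset.univ Finset.univ_nonempty} = {i}) := by
  subst hD
  refine ⟨fun X C => ?_, fun hne => ?_⟩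
  · simp only [isFace_empty_iff, isOneCell_empty_singleton, isZeroCell_singleton_singleton_iff,
      true_and, and_comm (a := X = _), exists_eq_left]
  · rw [image_singleton, Ne, singleton_inj] at hne
    rw [image_singleton]
    exact sdiff_eq_self_of_disjoint (disjoint_singleton.mpr hne)

/-- A 1-cell of the form `(∅, D)`, with `D = {i}`, is a face of exactly one 0-cell,
namely `({x}, D)` where `x` is the maximal element of `T` with respect to `<_i`;
and if this 0-cell is not balanced, then its type equals the type of `(∅, D)`,
namely `i`. -/
theorem stmt8 {T I : Type*} [Fintype T] [Fintype I] [Nonempty T] [Nonempty I]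
    [DecidableEq T] [DecidableEq I] (o : I → LinearOrder T) (c : T → I)
    (D : Finset I) (i : I) (hD : D = {i})
    (h1 : IsOneCell o c (∅ : Finset T) D) :
    (∀ X C, IsFace o c ∅ D X C ↔
        (X = {@Finset.max' T (o i) Finset.univ Finset.univ_nonempty} ∧ C = D)) ∧
    (D ≠ Finset.image c {@Finset.max' T (o i) Finset.univ Finset.univ_nonempty} →
        D \ Finset.image c {@Finset.max' T (o i) Finset.univ Finset.univ_nonempty} = {i}) :=
  stmt8_general o c D i hD
end

section
/- A 1-cell (Y, D) with Y ≠ ∅ is a face of exactly two 0-cells, and each of these two 0-cells is either balanced or has the same type as (Y, D). -/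
section

open Finset

variable {T I : Type*}

def minAt (o : I → LinearOrder T) (i : I) (X : Finset T) (hX : X.Nonempty) : T :=
  @Finset.min' T (o i) X hX

section MinAt

variable (o : I → LinearOrder T) {X : Finset T} (hX : X.Nonempty) {C : Finset I} {i : I}

lemma minAt_mem : minAt o i X hX ∈ X := @Finset.min'_mem T (o i) X hX

lemma minAt_le {x : T} (hx : x ∈ X) : (o i).le (minAt o i X hX) x :=
  @Finset.min'_le T (o i) X x hx

lemma le_minAt_iff {z : T} : (o i).le z (minAt o i X hX) ↔ ∀ x ∈ X, (o i).le z x :=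
  @Finset.le_min'_iff T (o i) X hX z

lemma eq_minAt_of_le {x : T} (hx : x ∈ X) (h : (o i).le x (minAt o i X hX)) :
    x = minAt o i X hX :=
  @le_antisymm T (o i).toPartialOrder _ _ h (minAt_le o hX hx)

lemma le_minAt_insert_iff [DecidableEq T] {x z : T} :
    (o i).le z (minAt o i (insert x X) (X.insert_nonempty x)) ↔
      (o i).le z x ∧ (o i).le z (minAt o i X hX) := by
  rw [le_minAt_iff, le_minAt_iff, Finset.forall_mem_insert]

lemma dominant_iff : Dominant o X C ↔ ∀ z, ∃ i ∈ C, (o i).le z (minAt o i X hX) := by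
  refine ⟨fun h z => ?_, fun h _ ⟨y, hy⟩ => ?_⟩
  · by_contra hz
    exact h hX ⟨z, fun i hi => @lt_of_not_ge T (o i) _ _ fun hle => hz ⟨i, hi, hle⟩⟩
  · obtain ⟨i, hi, hle⟩ := h y
    exact @not_lt_of_ge T (o i).toPreorder _ _ hle (hy i hi)

lemma Dominant.exists_minAt_eq (h : Dominant o X C) {x : T} (hx : x ∈ X) :
    ∃ i ∈ C, minAt o i X hX = x := by
  obtain ⟨i, hi, hle⟩ := (dominant_iff o hX).1 h x
  exact ⟨i, hi, (eq_minAt_of_le o hX hx hle).symm⟩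

lemma Dominant.injOn_minAt (h : Dominant o X C) (hcard : C.card ≤ X.card) :
    Set.InjOn (fun i => minAt o i X hX) C :=
  Finset.injOn_of_surjOn_of_card_le _ (fun _ _ => minAt_mem o hX)
    (fun _ hx => h.exists_minAt_eq o hX hx) hcard

end MinAt

section Doubled

variable (o : I → LinearOrder T) {Y : Finset T} (hY : Y.Nonempty) {D : Finset I} {l : I}

def IsDoubled (D : Finset I) (l : I) : Prop :=
  ∃ l' ∈ D, l' ≠ l ∧ minAt o l' Y hY = minAt o l Y hY

lemma exists_isDoubled_iff [DecidableEq I] (hdom : Dominant o Y D) (hcard : D.card = Y.card + 1) :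
    ∃ j ∈ D, ∃ k ∈ D, j ≠ k ∧ ∀ l ∈ D, IsDoubled o hY D l ↔ l = j ∨ l = k := by
  set m := fun i => minAt o i Y hY
  obtain ⟨j, hj, k, hk, hjk, hm⟩ := Finset.exists_ne_map_eq_of_card_lt_of_maps_to
    (by omega : Y.card < D.card) (fun _ _ => minAt_mem o hY : Set.MapsTo m D Y)
  have hinj : Set.InjOn m (D.erase j) := by
    refine Finset.injOn_of_surjOn_of_card_le m (fun _ _ => minAt_mem o hY) (fun y hy => ?_)
      (by rw [card_erase_of_mem hj]; omega)
    obtain ⟨i, hi, rfl⟩ := hdom.exists_minAt_eq o hY hy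
    by_cases hij : i = j
    · exact ⟨k, mem_erase.2 ⟨hjk.symm, hk⟩, by rw [hij]; exact hm.symm⟩
    · exact ⟨i, mem_erase.2 ⟨hij, hi⟩, rfl⟩
  refine ⟨j, hj, k, hk, hjk, fun l hl => ⟨fun ⟨l', hl', hl'l, he⟩ => ?_, ?_⟩⟩
  · by_contra! hne
    by_cases hl'j : l' = j
    · subst hl'j
      exact hne.2 (hinj (mem_erase.2 ⟨hne.1, hl⟩) (mem_erase.2 ⟨hjk.symm, hk⟩)
        (he.symm.trans hm))
    · exact hl'l (hinj (mem_erase.2 ⟨hl'j, hl'⟩) (mem_erase.2 ⟨hne.1, hl⟩) he)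
  · rintro (rfl | rfl)
    · exact ⟨k, hk, hjk.symm, hm.symm⟩
    · exact ⟨j, hj, hjk, hm⟩

lemma isDoubled_of_dominant_erase [DecidableEq I] (h : Dominant o Y (D.erase l)) :
    IsDoubled o hY D l := by
  obtain ⟨l', hl', he⟩ := h.exists_minAt_eq o hY (minAt_mem o hY (i := l))
  exact ⟨l', (mem_erase.1 hl').2, (mem_erase.1 hl').1, he⟩

end Doubled

section Pivot

variable [Fintype T] (o : I → LinearOrder T) {Y : Finset T} (hY : Y.Nonempty) {D : Finset I}
  {l : I}

open Classical in
noncomputable def coveredOnlyBy (D : Finset I) (l : I) : Finset T :=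
  univ.filter fun z => ∀ i ∈ D, (o i).le z (minAt o i Y hY) → i = l

/-- Scarf's ordinal pivot at the colour `l`. -/
noncomputable def pivot [DecidableEq T] [DecidableEq I] (D : Finset I) (l : I) :
    Finset T × Finset I :=
  if h : (coveredOnlyBy o hY D l).Nonempty then (insert (@Finset.max' T (o l) _ h) Y, D)
  else (Y, D.erase l)

lemma mem_coveredOnlyBy {z : T} :
    z ∈ coveredOnlyBy o hY D l ↔ ∀ i ∈ D, (o i).le z (minAt o i Y hY) → i = l := by
  simp [coveredOnlyBy]

lemma le_minAt_of_mem_coveredOnlyBy (hdom : Dominant o Y D) {z : T}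
    (hz : z ∈ coveredOnlyBy o hY D l) : (o l).le z (minAt o l Y hY) := by
  obtain ⟨i, hi, hle⟩ := (dominant_iff o hY).1 hdom z
  obtain rfl := (mem_coveredOnlyBy o hY).1 hz i hi hle
  exact hle

lemma disjoint_coveredOnlyBy (hdom : Dominant o Y D) {j k : I} (hjk : j ≠ k) :
    Disjoint (coveredOnlyBy o hY D j) (coveredOnlyBy o hY D k) := by
  refine Finset.disjoint_left.2 fun z hj hk => ?_
  obtain ⟨i, hi, hle⟩ := (dominant_iff o hY).1 hdom z
  exact hjk (((mem_coveredOnlyBy o hY).1 hj i hi hle).symm.trans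
    ((mem_coveredOnlyBy o hY).1 hk i hi hle))

lemma IsDoubled.disjoint_coveredOnlyBy (hdom : Dominant o Y D) (hl : IsDoubled o hY D l) :
    Disjoint (coveredOnlyBy o hY D l) Y := by
  obtain ⟨l', hl', hl'l, hm⟩ := hl
  refine Finset.disjoint_left.2 fun z hz hzY => hl'l ((mem_coveredOnlyBy o hY).1 hz l' hl' ?_)
  rw [hm, ← eq_minAt_of_le o hY hzY (le_minAt_of_mem_coveredOnlyBy o hY hdom hz)]
  exact (o l').le_refl z

lemma dominant_insert_max' [DecidableEq T] (hdom : Dominant o Y D) (hl : l ∈ D)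
    (hZ : (coveredOnlyBy o hY D l).Nonempty) :
    Dominant o (insert (@Finset.max' T (o l) _ hZ) Y) D := by
  set x := @Finset.max' T (o l) _ hZ
  have hxZ : x ∈ coveredOnlyBy o hY D l := @Finset.max'_mem T (o l) _ hZ
  refine (dominant_iff o (Y.insert_nonempty x)).2 fun z => ?_
  by_contra hz
  have hz' : ∀ i ∈ D, ¬ ((o i).le z x ∧ (o i).le z (minAt o i Y hY)) := fun i hi h =>
    hz ⟨i, hi, (le_minAt_insert_iff o hY).2 h⟩
  have hzZ : z ∈ coveredOnlyBy o hY D l := (mem_coveredOnlyBy o hY).2 fun i hi hle =>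
    (mem_coveredOnlyBy o hY).1 hxZ i hi
      (@le_trans T (o i).toPreorder _ _ _ (@le_of_not_ge T (o i) _ _ fun h => hz' i hi ⟨h, hle⟩)
        hle)
  exact hz' l hl ⟨@Finset.le_max' T (o l) _ z hzZ, le_minAt_of_mem_coveredOnlyBy o hY hdom hzZ⟩

lemma dominant_erase_s9 [DecidableEq I] (hZ : coveredOnlyBy o hY D l = ∅) :
    Dominant o Y (D.erase l) := by
  refine (dominant_iff o hY).2 fun z => ?_
  by_contra hz
  have : z ∈ coveredOnlyBy o hY D l := (mem_coveredOnlyBy o hY).2 fun i hi hle =>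
    by_contra fun hil => hz ⟨i, mem_erase.2 ⟨hil, hi⟩, hle⟩
  simp [hZ] at this

lemma pivot_eq_of_dominant_erase [DecidableEq T] [DecidableEq I]
    (h : Dominant o Y (D.erase l)) : pivot o hY D l = (Y, D.erase l) := by
  have hZ : coveredOnlyBy o hY D l = ∅ := by
    refine eq_empty_of_forall_notMem fun z hz => ?_
    obtain ⟨i, hi, hle⟩ := (dominant_iff o hY).1 h z
    exact (mem_erase.1 hi).1 ((mem_coveredOnlyBy o hY).1 hz i (mem_erase.1 hi).2 hle)
  simp [pivot, hZ]

lemma exists_pivot_eq_insert [DecidableEq T] [DecidableEq I] (hcard : D.card = Y.card + 1)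
    {x : T} (hx : x ∉ Y) (h : Dominant o (insert x Y) D) :
    ∃ l ∈ D, IsDoubled o hY D l ∧ pivot o hY D l = (insert x Y, D) := by
  have hX := Y.insert_nonempty x
  obtain ⟨l, hl, hMl⟩ := h.exists_minAt_eq o hX (mem_insert_self x Y)
  have hinj := h.injOn_minAt o hX (by rw [card_insert_of_notMem hx]; omega)
  have hxZ : x ∈ coveredOnlyBy o hY D l := (mem_coveredOnlyBy o hY).2 fun i hi hle =>
    hinj hi hl <| (eq_minAt_of_le o hX (mem_insert_self x Y)
      ((le_minAt_insert_iff o hY).2 ⟨(o i).le_refl x, hle⟩)).symm.trans hMl.symm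
  have hmax : ∀ z ∈ coveredOnlyBy o hY D l, (o l).le z x := fun z hz => by
    obtain ⟨i, hi, hle⟩ := (dominant_iff o hX).1 h z
    rw [le_minAt_insert_iff o hY] at hle
    obtain rfl := (mem_coveredOnlyBy o hY).1 hz i hi hle.2
    exact hle.1
  -- the colour whose minimum over `insert x Y` is `min_l Y` is the twin of `l`
  have hdoubled : IsDoubled o hY D l := by
    obtain ⟨i, hi, hMi⟩ :=
      h.exists_minAt_eq o hX (mem_insert_of_mem (minAt_mem o hY (i := l)))
    refine ⟨i, hi, fun hil => hx ?_, ?_⟩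
    · rw [← hMl, ← hil, hMi]
      exact minAt_mem o hY
    · refine (eq_minAt_of_le o hY (minAt_mem o hY) ?_).symm
      rw [← hMi]
      exact minAt_le o hX (mem_insert_of_mem (minAt_mem o hY))
  have hZ : (coveredOnlyBy o hY D l).Nonempty := ⟨x, hxZ⟩
  refine ⟨l, hl, hdoubled, ?_⟩
  rw [pivot, dif_pos hZ, (@Finset.max'_eq_iff T (o l) _ hZ x).2 ⟨hxZ, hmax⟩]

lemma pivot_ne_pivot [DecidableEq T] [DecidableEq I] (hdom : Dominant o Y D) {j k : I}
    (hjk : j ≠ k) (hk : k ∈ D) (hj : IsDoubled o hY D j) (hk' : IsDoubled o hY D k) :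
    pivot o hY D j ≠ pivot o hY D k := by
  have hjY := Finset.disjoint_left.1 (hj.disjoint_coveredOnlyBy o hY hdom)
  have hkY := Finset.disjoint_left.1 (hk'.disjoint_coveredOnlyBy o hY hdom)
  unfold pivot
  split_ifs with hZj hZk hZk <;> intro h <;> obtain ⟨hX, hC⟩ := Prod.mk.inj h
  · set xj := @Finset.max' T (o j) _ hZj
    have hxj : xj ∈ coveredOnlyBy o hY D j := @Finset.max'_mem T (o j) _ hZj
    have hxk := @Finset.max'_mem T (o k) _ hZk
    rcases mem_insert.1 (hX.subset (mem_insert_self xj Y)) with he | he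
    · exact Finset.disjoint_left.1 (disjoint_coveredOnlyBy o hY hdom hjk) hxj (he ▸ hxk)
    · exact hjY hxj he
  · exact hjY (@Finset.max'_mem T (o j) _ hZj) (hX.subset (mem_insert_self _ Y))
  · exact hkY (@Finset.max'_mem T (o k) _ hZk) (hX.symm.subset (mem_insert_self _ Y))
  · exact notMem_erase k D (hC ▸ mem_erase.2 ⟨hjk.symm, hk⟩)

end Pivot

section Faces

variable [DecidableEq T] [DecidableEq I] (o : I → LinearOrder T) (c : T → I)
  {Y X : Finset T} {D C : Finset I}

lemma isFace_insert (h1 : IsOneCell o c Y D) {x : T} (hx : x ∉ Y)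
    (h : Dominant o (insert x Y) D) : IsFace o c Y D (insert x Y) D := by
  refine ⟨h1, ⟨⟨h1.1.1, h, ?_⟩, ?_⟩,
    Or.inl ⟨rfl, x, mem_insert_self x Y, (erase_insert hx).symm⟩⟩
  · exact (card_le_card (sdiff_subset_sdiff subset_rfl
      (image_subset_image (subset_insert x Y)))).trans h1.1.2.2
  · rw [card_insert_of_notMem hx, h1.2]

lemma isFace_erase (h1 : IsOneCell o c Y D) (hY : Y.Nonempty) {l : I} (hl : l ∈ D)
    (h : Dominant o Y (D.erase l)) : IsFace o c Y D Y (D.erase l) := by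
  have hcard : (D.erase l).card = Y.card := by rw [card_erase_of_mem hl, h1.2]; rfl
  refine ⟨h1, ⟨⟨?_, h, ?_⟩, hcard⟩,
    Or.inr ⟨rfl, l, notMem_erase l D, (insert_erase hl).symm⟩⟩
  · rw [← card_pos, hcard]
    exact hY.card_pos
  · exact (card_le_card (sdiff_subset_sdiff (erase_subset l D) subset_rfl)).trans h1.1.2.2

lemma IsFace.cases (h : IsFace o c Y D X C) :
    (C = D ∧ ∃ x ∉ Y, X = insert x Y ∧ Dominant o X D) ∨
      (X = Y ∧ ∃ l ∈ D, C = D.erase l ∧ Dominant o Y C) := by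
  obtain ⟨-, ⟨⟨-, hdom, -⟩, -⟩, ⟨rfl, x, hx, rfl⟩ | ⟨rfl, l, hl, rfl⟩⟩ := h
  · exact .inl ⟨rfl, x, notMem_erase x X, (insert_erase hx).symm, hdom⟩
  · exact .inr ⟨rfl, l, mem_insert_self l C, (erase_insert hl).symm, hdom⟩

lemma IsFace.sdiff_image_subset (h : IsFace o c Y D X C) : C \ X.image c ⊆ D \ Y.image c := by
  obtain ⟨-, -, ⟨rfl, x, -, rfl⟩ | ⟨rfl, i, -, rfl⟩⟩ := h
  · exact sdiff_subset_sdiff subset_rfl (image_subset_image (erase_subset x X))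
  · exact sdiff_subset_sdiff (subset_insert i C) subset_rfl

lemma IsFace.eq_image_or_sdiff_eq (h : IsFace o c Y D X C) :
    C = X.image c ∨ C \ X.image c = D \ Y.image c := by
  have hsub := h.sdiff_image_subset
  obtain ⟨⟨⟨-, -, hcol⟩, -⟩, ⟨-, hcard⟩, -⟩ := h
  by_cases heq : C \ X.image c = D \ Y.image c
  · exact .inr heq
  · refine .inl (eq_of_subset_of_card_le ?_ (card_image_le.trans hcard.ge))
    refine sdiff_eq_empty_iff_subset.1 (by_contra fun hne => heq ?_)
    exact eq_of_subset_of_card_le hsub (hcol.trans (card_pos.2 (nonempty_of_ne_empty hne)))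

lemma isFace_pivot [Fintype T] (h1 : IsOneCell o c Y D) (hY : Y.Nonempty) {l : I} (hl : l ∈ D)
    (hd : IsDoubled o hY D l) : IsFace o c Y D (pivot o hY D l).1 (pivot o hY D l).2 := by
  unfold pivot
  split_ifs with hZ
  · exact isFace_insert o c h1
      (Finset.disjoint_left.1 (hd.disjoint_coveredOnlyBy o hY h1.1.2.1)
        (@Finset.max'_mem T (o l) _ hZ))
      (dominant_insert_max' o hY h1.1.2.1 hl hZ)
  · exact isFace_erase o c h1 hY hl (dominant_erase_s9 o hY (not_nonempty_iff_eq_empty.1 hZ))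

lemma isFace_iff_exists_pivot [Fintype T] (h1 : IsOneCell o c Y D) (hY : Y.Nonempty) :
    IsFace o c Y D X C ↔ ∃ l ∈ D, IsDoubled o hY D l ∧ (X, C) = pivot o hY D l := by
  constructor
  · intro h
    rcases h.cases with ⟨rfl, x, hx, rfl, hdom⟩ | ⟨rfl, l, hl, rfl, hdom⟩
    · obtain ⟨l, hl, hd, he⟩ := exists_pivot_eq_insert o hY h1.2 hx hdom
      exact ⟨l, hl, hd, he.symm⟩
    · exact ⟨l, hl, isDoubled_of_dominant_erase o hY hdom,
        (pivot_eq_of_dominant_erase o hY hdom).symm⟩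
  · rintro ⟨l, hl, hd, he⟩
    obtain ⟨rfl, rfl⟩ := Prod.ext_iff.1 he
    exact isFace_pivot o c h1 hY hl hd

end Faces

end

theorem stmt9_general {T I : Type*} [Fintype T]
    [DecidableEq T] [DecidableEq I] (o : I → LinearOrder T) (c : T → I)
    (Y : Finset T) (D : Finset I) (h1 : IsOneCell o c Y D) (hY : Y.Nonempty) :
    (∃ p q : Finset T × Finset I, p ≠ q ∧
        ∀ r : Finset T × Finset I, IsFace o c Y D r.1 r.2 ↔ (r = p ∨ r = q)) ∧
    (∀ X C, IsFace o c Y D X C →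
        (C = X.image c ∨ C \ X.image c = D \ Y.image c)) := by
  have hdom := h1.1.2.1
  obtain ⟨j, hj, k, hk, hjk, hdoubled⟩ := exists_isDoubled_iff o hY hdom h1.2
  refine ⟨⟨pivot o hY D j, pivot o hY D k, pivot_ne_pivot o hY hdom hjk hk
      ((hdoubled j hj).2 (.inl rfl)) ((hdoubled k hk).2 (.inr rfl)), fun r => ?_⟩,
    fun X C h => h.eq_image_or_sdiff_eq o c⟩
  rw [isFace_iff_exists_pivot o c h1 hY]
  constructor
  · rintro ⟨l, hl, hd, hr⟩
    rcases (hdoubled l hl).1 hd with rfl | rfl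
    · exact .inl hr
    · exact .inr hr
  · rintro (rfl | rfl)
    · exact ⟨j, hj, (hdoubled j hj).2 (.inl rfl), rfl⟩
    · exact ⟨k, hk, (hdoubled k hk).2 (.inr rfl), rfl⟩

/-- A 1-cell `(Y, D)` with `Y ≠ ∅` is a face of exactly two 0-cells, and each of
these 0-cells is either balanced or has the same type as `(Y, D)`. -/
theorem stmt9 {T I : Type*} [Fintype T] [Fintype I] [Nonempty T] [Nonempty I]
    [DecidableEq T] [DecidableEq I] (o : I → LinearOrder T) (c : T → I)
    (Y : Finset T) (D : Finset I) (h1 : IsOneCell o c Y D) (hY : Y.Nonempty) :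
    (∃ p q : Finset T × Finset I, p ≠ q ∧
        ∀ r : Finset T × Finset I, IsFace o c Y D r.1 r.2 ↔ (r = p ∨ r = q)) ∧
    (∀ X C, IsFace o c Y D X C →
        (C = X.image c ∨ C \ X.image c = D \ Y.image c)) :=
  stmt9_general o c Y D h1 hY
end

section
/- Let Y ⊆ T be a nonempty set which is dominant with respect to D ⊆ I, where |D| = |Y| + 1. Then there exists a unique unordered pair of distinct elements a, b ∈ D such that min_a Y = min_b Y; that is, there exist a, b ∈ D with a ≠ b and min_a Y = min_b Y, and for any two other distinct elements k, l ∈ D not both in {a, b}, min_k Y ≠ min_l Y. -/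
namespace Finset

variable {α β : Type*} [DecidableEq α] {f : α → β} {s : Finset α} {t : Finset β}

theorem injOn_erase_of_surjOn_of_card_eq_succ (hmaps : Set.MapsTo f s t)
    (hsurj : Set.SurjOn f s t) (hcard : #s = #t + 1) {a b : α} (ha : a ∈ s) (hb : b ∈ s)
    (hab : a ≠ b) (hfab : f a = f b) : Set.InjOn f (s.erase b) := by
  classical
  have himage : (s.erase b).image f = t := by
    refine Subset.antisymm (fun y hy => ?_) (fun y hy => ?_)
    · obtain ⟨i, hi, rfl⟩ := mem_image.mp hy
      exact hmaps (mem_of_mem_erase hi)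
    · obtain ⟨i, hi, rfl⟩ := hsurj hy
      obtain rfl | hib := eq_or_ne i b
      · exact mem_image.mpr ⟨a, mem_erase.mpr ⟨hab, ha⟩, hfab⟩
      · exact mem_image_of_mem f (mem_erase.mpr ⟨hib, hi⟩)
  apply injOn_of_card_image_eq
  rw [himage, card_erase_of_mem hb, hcard, Nat.add_sub_cancel]

theorem exists_unique_pair_map_eq_of_surjOn_of_card_eq_succ (hmaps : Set.MapsTo f s t)
    (hsurj : Set.SurjOn f s t) (hcard : #s = #t + 1) :
    ∃ a ∈ s, ∃ b ∈ s, a ≠ b ∧ f a = f b ∧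
      ∀ k ∈ s, ∀ l ∈ s, k ≠ l → f k = f l → ({k, l} : Finset α) = {a, b} := by
  obtain ⟨a, ha, b, hb, hab, hfab⟩ :=
    exists_ne_map_eq_of_card_lt_of_maps_to (hcard ▸ Nat.lt_succ_self _) hmaps
  have hinj := injOn_erase_of_surjOn_of_card_eq_succ hmaps hsurj hcard ha hb hab hfab
  have eq_a : ∀ k ∈ s, k ≠ b → f k = f b → k = a := fun k hk hkb hfk =>
    hinj (mem_erase.mpr ⟨hkb, hk⟩) (mem_erase.mpr ⟨hab, ha⟩) (hfk.trans hfab.symm)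
  refine ⟨a, ha, b, hb, hab, hfab, fun k hk l hl hkl hfkl => ?_⟩
  obtain rfl | hkb := eq_or_ne k b
  · rw [eq_a l hl hkl.symm hfkl.symm, pair_comm]
  obtain rfl | hlb := eq_or_ne l b
  · rw [eq_a k hk hkb hfkl]
  · exact absurd (hinj (mem_erase.mpr ⟨hkb, hk⟩) (mem_erase.mpr ⟨hlb, hl⟩) hfkl) hkl

end Finset

theorem Dominant.surjOn_min' {T I : Type*} {o : I → LinearOrder T} {Y : Finset T}
    {D : Finset I} (hdom : Dominant o Y D) (hY : Y.Nonempty) :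
    Set.SurjOn (fun i => @Finset.min' T (o i) Y hY) D Y := by
  intro y hy
  have hno_witness := hdom hY
  push Not at hno_witness
  obtain ⟨i, hi, hge⟩ := hno_witness y
  have hle : (o i).le (@Finset.min' T (o i) Y hY) y := @Finset.min'_le T (o i) Y y hy
  exact ⟨i, hi, @le_antisymm T (o i).toPartialOrder _ _ hle hge⟩

theorem stmt10_general {T I : Type*} [DecidableEq I] (o : I → LinearOrder T)
    (Y : Finset T) (D : Finset I) (hY : Y.Nonempty)
    (hcard : D.card = Y.card + 1) (hdom : Dominant o Y D) :
    ∃ a ∈ D, ∃ b ∈ D, a ≠ b ∧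
      @Finset.min' T (o a) Y hY = @Finset.min' T (o b) Y hY ∧
      ∀ k ∈ D, ∀ l ∈ D, k ≠ l →
        @Finset.min' T (o k) Y hY = @Finset.min' T (o l) Y hY →
        ({k, l} : Finset I) = {a, b} :=
  Finset.exists_unique_pair_map_eq_of_surjOn_of_card_eq_succ
    (fun i _ => @Finset.min'_mem T (o i) Y hY) (hdom.surjOn_min' hY) hcard

/-- If `Y ⊆ T` is nonempty and dominant with respect to `D ⊆ I` with `|D| = |Y| + 1`,
then there is a unique unordered pair of distinct colors `a, b ∈ D` with
`min_a Y = min_b Y`. -/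
theorem stmt10 {T I : Type*} [Fintype T] [Fintype I] [Nonempty T] [Nonempty I]
    [DecidableEq T] [DecidableEq I] (o : I → LinearOrder T)
    (Y : Finset T) (D : Finset I) (hY : Y.Nonempty)
    (hcard : D.card = Y.card + 1) (hdom : Dominant o Y D) :
    ∃ a ∈ D, ∃ b ∈ D, a ≠ b ∧
      @Finset.min' T (o a) Y hY = @Finset.min' T (o b) Y hY ∧
      ∀ k ∈ D, ∀ l ∈ D, k ≠ l →
        @Finset.min' T (o k) Y hY = @Finset.min' T (o l) Y hY →
        ({k, l} : Finset I) = {a, b} :=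
  stmt10_general o Y D hY hcard hdom
end

section
/- Let (Y, D) be a 1-cell with Y ≠ ∅, let {a, b} ⊆ D be the unique pair of distinct colors with min_a Y = min_b Y, and for i ∈ {a, b} let M_i = { y ∈ T : min_k Y <_k y for all k ∈ D \ {i} }, and, when M_i ≠ ∅, let m_i be the maximal element of M_i with respect to <_i. Then for x ∈ T \ Y, the set Y ∪ {x} is dominant with respect to D if and only if x = m_i for some i ∈ {a, b} with M_i ≠ ∅. -/
lemma stmt12_surj {T I : Type*} (o : I → LinearOrder T) (X : Finset T) (C : Finset I)
    (hd : Dominant o X C) (hX : X.Nonempty) {z : T} (hz : z ∈ X) :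
    ∃ k ∈ C, @Finset.min' T (o k) X hX = z := by
  by_contra h
  push_neg at h
  exact hd hX ⟨z, fun k hk =>
    @lt_of_le_of_ne T (o k).toPartialOrder _ _ (@Finset.min'_le T (o k) X z hz) (h k hk)⟩

lemma stmt12_min_insert {T : Type*} [DecidableEq T] [LinearOrder T] (x : T) (Y : Finset T)
    (hY : Y.Nonempty) (h : (insert x Y).Nonempty) :
    (insert x Y).min' h = x ∨ (insert x Y).min' h = Y.min' hY := by
  rcases Finset.mem_insert.1 ((insert x Y).min'_mem h) with h1 | h1
  · exact Or.inl h1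
  · exact Or.inr (le_antisymm
      ((insert x Y).min'_le _ (Finset.mem_insert_of_mem (Y.min'_mem hY)))
      (Y.min'_le _ h1))

/-- Let `(Y, D)` be a 1-cell with `Y ≠ ∅`, let `a ≠ b` in `D` be the unique pair with
`min_a Y = min_b Y`, and for `i ∈ {a, b}` let
`M_i = { y ∈ T : min_k Y <_k y for all k ∈ D \ {i} }`. Then for `x ∈ T \ Y`, the set
`Y ∪ {x}` is dominant with respect to `D` if and only if `x` is the maximal element
of `M_i` with respect to `<_i` for some `i ∈ {a, b}` with `M_i ≠ ∅`. -/
theorem stmt12 {T I : Type*} [Fintype T] [Fintype I] [Nonempty T] [Nonempty I]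
    [DecidableEq T] [DecidableEq I] (o : I → LinearOrder T) (c : T → I)
    (Y : Finset T) (D : Finset I) (h1 : IsOneCell o c Y D) (hY : Y.Nonempty)
    (a b : I) (ha : a ∈ D) (hb : b ∈ D) (hab : a ≠ b)
    (hmin : @Finset.min' T (o a) Y hY = @Finset.min' T (o b) Y hY) :
    ∀ x : T, x ∉ Y →
      (Dominant o (insert x Y) D ↔
        ∃ i, (i = a ∨ i = b) ∧
          x ∈ {y : T | ∀ k ∈ D.erase i, (o k).lt (@Finset.min' T (o k) Y hY) y} ∧
          ∀ y ∈ {y : T | ∀ k ∈ D.erase i, (o k).lt (@Finset.min' T (o k) Y hY) y},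
            (o i).le y x) := by
  obtain ⟨⟨hDne, hdomY, hcard1⟩, hcardD⟩ := h1
  have f : I → T := fun k => @Finset.min' T (o k) Y hY
  intro x hx
  -- notation: write m k for min of Y w.r.t. o k
  have hkey : ∀ j ∈ D, j ≠ a → j ≠ b → ∀ k ∈ D,
      @Finset.min' T (o j) Y hY = @Finset.min' T (o k) Y hY → j = k := by
    intro j hj hja hjb k hk hfjk
    by_contra hjk
    have hsub1 : Y ⊆ (D.erase j).image (fun l => @Finset.min' T (o l) Y hY) := by
      intro z hz
      obtain ⟨l, hl, hlz⟩ := stmt12_surj o Y D hdomY hY hz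
      rcases eq_or_ne l j with rfl | hlj
      · exact Finset.mem_image.2 ⟨k, Finset.mem_erase.2 ⟨fun h => hjk h.symm, hk⟩,
          by rw [← hfjk]; exact hlz⟩
      · exact Finset.mem_image.2 ⟨l, Finset.mem_erase.2 ⟨hlj, hl⟩, hlz⟩
    have hsub2 : (D.erase j).image (fun l => @Finset.min' T (o l) Y hY) ⊆
        ((D.erase j).erase b).image (fun l => @Finset.min' T (o l) Y hY) := by
      intro z hz
      obtain ⟨l, hl, hlz⟩ := Finset.mem_image.1 hz
      rcases eq_or_ne l b with rfl | hlb
      · exact Finset.mem_image.2 ⟨a,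
          Finset.mem_erase.2 ⟨hab, Finset.mem_erase.2 ⟨hja.symm, ha⟩⟩,
          by rw [hmin]; exact hlz⟩
      · exact Finset.mem_image.2 ⟨l, Finset.mem_erase.2 ⟨hlb, hl⟩, hlz⟩
    have hc1 : Y.card ≤ (((D.erase j).erase b).image
        (fun l => @Finset.min' T (o l) Y hY)).card :=
      Finset.card_le_card (hsub1.trans hsub2)
    have hc2 := Finset.card_image_le (s := (D.erase j).erase b)
      (f := fun l => @Finset.min' T (o l) Y hY)
    have hbe : b ∈ D.erase j := Finset.mem_erase.2 ⟨hjb.symm, hb⟩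
    have hc3 : ((D.erase j).erase b).card = D.card - 1 - 1 := by
      rw [Finset.card_erase_of_mem hbe, Finset.card_erase_of_mem hj]
    have hYc : 1 ≤ Y.card := hY.card_pos
    omega
  have hX' : (insert x Y).Nonempty := Finset.insert_nonempty x Y
  have hfne : ∀ k ∈ D, @Finset.min' T (o k) Y hY ≠ x :=
    fun k _ h => hx (h ▸ @Finset.min'_mem T (o k) Y hY)
  have hcases : ∀ (h : (insert x Y).Nonempty) (k : I),
      @Finset.min' T (o k) (insert x Y) h = x ∨
      @Finset.min' T (o k) (insert x Y) h = @Finset.min' T (o k) Y hY :=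
    fun h k => @stmt12_min_insert T _ (o k) x Y hY h
  have hminx : ∀ k : I, (o k).lt x (@Finset.min' T (o k) Y hY) →
      @Finset.min' T (o k) (insert x Y) hX' = x := by
    intro k hk
    rcases hcases hX' k with h1 | h1
    · exact h1
    · exfalso
      have h2 := @Finset.min'_le T (o k) (insert x Y) x (Finset.mem_insert_self x Y)
      rw [h1] at h2
      exact @lt_irrefl T (o k).toPartialOrder.toPreorder x
        (@lt_of_lt_of_le T (o k).toPartialOrder.toPreorder _ _ _ hk h2)
  constructor
  · intro hdom
    have harg : ∀ j ∈ D, (o j).lt x (@Finset.min' T (o j) Y hY) → j = a ∨ j = b := by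
      intro j hjD hj
      by_contra h
      push_neg at h
      obtain ⟨k, hkD, hk⟩ := stmt12_surj o (insert x Y) D hdom hX'
        (Finset.mem_insert_of_mem (@Finset.min'_mem T (o j) Y hY))
      rcases hcases hX' k with h2 | h2
      · exact hfne j hjD (hk.symm.trans h2)
      · have hfkj : @Finset.min' T (o j) Y hY = @Finset.min' T (o k) Y hY :=
          hk.symm.trans h2
        have hjk := hkey j hjD h.1 h.2 k hkD hfkj
        rw [← hjk] at h2
        rw [hminx j hj] at h2
        exact hfne j hjD h2.symm
    have hKne : ∃ i ∈ D, (o i).lt x (@Finset.min' T (o i) Y hY) := by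
      by_contra h
      push_neg at h
      refine hdom hX' ⟨x, fun k hk => ?_⟩
      rcases hcases hX' k with h1 | h1
      · exfalso
        have h2 := h k hk
        have h3 := @Finset.min'_le T (o k) (insert x Y)
          (@Finset.min' T (o k) Y hY)
          (Finset.mem_insert_of_mem (@Finset.min'_mem T (o k) Y hY))
        rw [h1] at h3
        exact hfne k hk (@le_antisymm T (o k).toPartialOrder _ _ h2 h3)
      · rw [h1]
        exact @lt_of_le_of_ne T (o k).toPartialOrder _ _
          (h k hk) (hfne k hk)
    obtain ⟨i, hiD, hPi⟩ := hKne
    have huniq : ∀ j ∈ D, ∀ k ∈ D, (o j).lt x (@Finset.min' T (o j) Y hY) →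
        (o k).lt x (@Finset.min' T (o k) Y hY) → j = k := by
      intro j hjD k hkD hj hk
      by_contra hjk
      have hja := harg j hjD hj
      have hka := harg k hkD hk
      have hfjk : @Finset.min' T (o j) Y hY = @Finset.min' T (o k) Y hY := by
        rcases hja with rfl | rfl <;> rcases hka with rfl | rfl <;>
          first | rfl | exact hmin | exact hmin.symm | exact absurd rfl hjk
      obtain ⟨l, hlD, hl⟩ := stmt12_surj o (insert x Y) D hdom hX'
        (Finset.mem_insert_of_mem (@Finset.min'_mem T (o j) Y hY))
      rcases hcases hX' l with h2 | h2
      · exact hfne j hjD (hl.symm.trans h2)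
      · have hflj : @Finset.min' T (o l) Y hY = @Finset.min' T (o j) Y hY :=
          h2.symm.trans hl
        by_cases hlab : l = a ∨ l = b
        · have hlx : (o l).lt x (@Finset.min' T (o l) Y hY) := by
            rcases hja with rfl | rfl <;> rcases hka with rfl | rfl <;>
              rcases hlab with rfl | rfl <;>
              first | exact hj | exact hk | exact absurd rfl hjk
          exact hfne l hlD ((hminx l hlx).symm.trans h2).symm
        · push_neg at hlab
          have hlj := hkey l hlD hlab.1 hlab.2 j hjD hflj
          subst hlj
          exact hfne l hlD ((hminx l hj).symm.trans h2).symm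
    refine ⟨i, harg i hiD hPi, ?_, ?_⟩
    · simp only [Set.mem_setOf_eq]
      intro k hk
      obtain ⟨hki, hkD⟩ := Finset.mem_erase.1 hk
      have hnlt : ¬ (o k).lt x (@Finset.min' T (o k) Y hY) :=
        fun hlt => hki (huniq k hkD i hiD hlt hPi)
      exact @lt_of_le_of_ne T (o k).toPartialOrder _ _
        (@le_of_not_gt T (o k) _ _ hnlt) (hfne k hkD)
    · simp only [Set.mem_setOf_eq]
      intro y hy
      by_contra hle
      have hxy : (o i).lt x y := @lt_of_not_ge T (o i) _ _ hle
      refine hdom hX' ⟨y, fun k hkD => ?_⟩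
      rcases eq_or_ne k i with rfl | hki
      · rw [hminx k hPi]
        exact hxy
      · have h3 : (o k).le (@Finset.min' T (o k) (insert x Y) hX')
            (@Finset.min' T (o k) Y hY) :=
          @Finset.min'_le T (o k) (insert x Y) _
            (Finset.mem_insert_of_mem (@Finset.min'_mem T (o k) Y hY))
        exact @lt_of_le_of_lt T (o k).toPartialOrder.toPreorder _ _ _ h3
          (hy k (Finset.mem_erase.2 ⟨hki, hkD⟩))
  · rintro ⟨i, hiab, hxM, hxmax⟩ hX'' ⟨y, hy⟩
    simp only [Set.mem_setOf_eq] at hxM hxmax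
    have hiD : i ∈ D := by rcases hiab with rfl | rfl <;> assumption
    have hyM : ∀ k ∈ D.erase i, (o k).lt (@Finset.min' T (o k) Y hY) y := by
      intro k hk
      obtain ⟨hki, hkD⟩ := Finset.mem_erase.1 hk
      have h2 := hy k hkD
      rcases hcases hX'' k with h1 | h1
      · rw [h1] at h2
        exact @lt_trans T (o k).toPartialOrder.toPreorder _ _ _ (hxM k hk) h2
      · rw [h1] at h2
        exact h2
    have h2 := hy i hiD
    rcases hcases hX'' i with h1 | h1
    · rw [h1] at h2
      exact @lt_irrefl T (o i).toPartialOrder.toPreorder x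
        (@lt_of_lt_of_le T (o i).toPartialOrder.toPreorder _ _ _ h2 (hxmax y hyM))
    · rw [h1] at h2
      refine hdomY hY ⟨y, fun k hkD => ?_⟩
      rcases eq_or_ne k i with rfl | hki
      · exact h2
      · exact hyM k (Finset.mem_erase.2 ⟨hki, hkD⟩)
end

section
/- If X ⊆ T_n is nonempty and dominant with respect to a nonempty C ⊆ I, then 0 ≤ x_i − m_i < d/n for every x ∈ X and every i ∈ I, where m ∈ ℝ^d is the point with coordinates m_i = (min_i X)_i for i ∈ C and m_i = 0 for i ∉ C. -/
/-!
Every `x ∈ X` dominates `m` coordinatewise, since `x_i < (min_i X)_i` would put `x` below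
`min_i X` in `<_i`. If some `x_i - m_i ≥ d/n`, then `∑_{j ∈ C} (m_j + 1/n) ≤ ∑_j x_j = 1`, so
raising every coordinate `j ∈ C` of `m` by `1/n`, zeroing the others and putting the remaining
mass on coordinate `i` gives a point of `T_n` strictly above every `min_j X` in coordinate `j`,
hence above it in `<_j`, against dominance.
-/

/-- The lattice points of the standard `(d-1)`-simplex with denominator `n`:
points of `Δ^{d-1}` all of whose coordinates are multiples of `1/n`. -/
abbrev LatticePt (d n : ℕ) : Type :=
  {x : Fin d → ℝ // (∀ i, 0 ≤ x i) ∧ (∑ i, x i = 1) ∧ ∀ i, ∃ k : ℤ, x i = (k : ℝ) / n}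

open Finset

lemma mem_zmultiples_natCast_inv_iff {n : ℕ} {x : ℝ} :
    x ∈ AddSubgroup.zmultiples ((n : ℝ)⁻¹) ↔ ∃ k : ℤ, x = k / n := by
  simp only [AddSubgroup.mem_zmultiples_iff, zsmul_eq_mul, div_eq_mul_inv, eq_comm]

lemma Finset.apply_min'_le {α β : Type*} [LinearOrder α] [LinearOrder β] {f : α → β}
    (hf : ∀ a b, f a < f b → a < b) {X : Finset α} (hX : X.Nonempty) {x : α} (hx : x ∈ X) :
    f (X.min' hX) ≤ f x :=
  le_of_not_gt fun h => (hf _ _ h).not_ge (X.min'_le x hx)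

lemma sum_add_sub_le_sum {ι : Type*} [Fintype ι] {a b : ι → ℝ} (hab : ∀ j, a j ≤ b j) (i : ι) :
    ∑ j, a j + (b i - a i) ≤ ∑ j, b j := by
  have h := single_le_sum (f := fun j => b j - a j) (fun j _ => sub_nonneg.2 (hab j)) (mem_univ i)
  rw [sum_sub_distrib] at h
  linarith

lemma exists_latticePt_gt {d n : ℕ} (hn : 1 ≤ n) (C : Finset (Fin d)) (m : Fin d → ℝ)
    (hm₀ : ∀ j, 0 ≤ m j) (hm : ∀ j, ∃ k : ℤ, m j = k / n)
    (hbudget : ∑ j ∈ C, m j + #C / n ≤ 1) (i : Fin d) :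
    ∃ y : LatticePt d n, ∀ j ∈ C, m j < y.1 j := by
  have hn₀ : (0 : ℝ) < n := by exact_mod_cast hn
  have hstep : (0 : ℝ) < 1 / n := by positivity
  set S : ℝ := 1 - (∑ j ∈ C, m j + #C / n)
  have hS₀ : 0 ≤ S := sub_nonneg.2 hbudget
  let y : Fin d → ℝ := fun j => (if j ∈ C then m j + 1 / n else 0) + if j = i then S else 0
  have hy₀ : ∀ j, 0 ≤ y j := fun j =>
    add_nonneg (ite_nonneg (by linarith [hm₀ j]) le_rfl) (ite_nonneg hS₀ le_rfl)
  have hy_sum : ∑ j, y j = 1 := by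
    simp only [y, sum_add_distrib, Fintype.sum_ite_mem, sum_ite_eq', mem_univ, if_true, sum_const,
      nsmul_eq_mul, S]
    ring
  have hy_lattice : ∀ j, ∃ k : ℤ, y j = k / n := by
    have h1n : (1 / n : ℝ) ∈ AddSubgroup.zmultiples ((n : ℝ)⁻¹) := by
      rw [one_div]; exact AddSubgroup.mem_zmultiples _
    have hmL : ∀ j, m j ∈ AddSubgroup.zmultiples ((n : ℝ)⁻¹) := fun j =>
      mem_zmultiples_natCast_inv_iff.2 (hm j)
    have hS : S ∈ AddSubgroup.zmultiples ((n : ℝ)⁻¹) := by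
      refine sub_mem ?_ (add_mem (AddSubgroup.sum_mem _ fun j _ => hmL j) ?_)
      · exact mem_zmultiples_natCast_inv_iff.2 ⟨n, by rw [Int.cast_natCast, div_self hn₀.ne']⟩
      · rw [div_eq_mul_one_div, ← nsmul_eq_mul]; exact nsmul_mem h1n _
    intro j
    refine mem_zmultiples_natCast_inv_iff.1 (add_mem ?_ ?_)
    · split_ifs
      exacts [add_mem (hmL j) h1n, zero_mem _]
    · split_ifs
      exacts [hS, zero_mem _]
  refine ⟨⟨y, hy₀, hy_sum, hy_lattice⟩, fun j hj => ?_⟩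
  have : 0 ≤ if j = i then S else 0 := ite_nonneg hS₀ le_rfl
  simp only [y, if_pos hj]
  linarith

theorem stmt14_general (d n : ℕ) (hn : 1 ≤ n)
    (o : Fin d → LinearOrder (LatticePt d n))
    (ho : ∀ (i : Fin d) (x y : LatticePt d n), x.1 i < y.1 i → (o i).lt x y)
    (X : Finset (LatticePt d n)) (hX : X.Nonempty)
    (C : Finset (Fin d))
    (hdom : ¬ ∃ y : LatticePt d n, ∀ i ∈ C, (o i).lt (@Finset.min' _ (o i) X hX) y) :
    ∀ x ∈ X, ∀ i : Fin d,
      0 ≤ x.1 i - (if i ∈ C then (@Finset.min' _ (o i) X hX).1 i else 0) ∧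
      x.1 i - (if i ∈ C then (@Finset.min' _ (o i) X hX).1 i else 0) < (d : ℝ) / n := by
  let M : Fin d → LatticePt d n := fun j => @Finset.min' _ (o j) X hX
  let μ : Fin d → ℝ := fun j => (M j).1 j
  let m : Fin d → ℝ := fun j => if j ∈ C then μ j else 0
  have hm_le : ∀ x ∈ X, ∀ j, m j ≤ x.1 j := fun x hx j => by
    unfold m; split_ifs
    exacts [@Finset.apply_min'_le _ _ (o j) _ _ (ho j) X hX x hx, x.2.1 j]
  intro x hx i
  refine ⟨sub_nonneg.2 (hm_le x hx i), not_le.1 fun hfar => hdom ?_⟩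
  have hbudget : ∑ j ∈ C, μ j + #C / n ≤ 1 := calc
    ∑ j ∈ C, μ j + #C / n ≤ ∑ j, m j + (x.1 i - m i) := by
      rw [Fintype.sum_ite_mem]
      gcongr
      exact le_trans (by gcongr; simpa using card_le_univ C) hfar
    _ ≤ 1 := (sum_add_sub_le_sum (hm_le x hx) i).trans_eq x.2.2.1
  obtain ⟨y, hy⟩ := exists_latticePt_gt hn C μ (fun j => (M j).2.1 j) (fun j => (M j).2.2.2 j)
    hbudget i
  exact ⟨y, fun j hj => ho j _ _ (hy j hj)⟩

/-- If `X ⊆ T_n` is nonempty and dominant with respect to a nonempty `C ⊆ I`,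
then `0 ≤ x_i − m_i < d/n` for every `x ∈ X` and every `i ∈ I`, where
`m_i = (min_i X)_i` for `i ∈ C` and `m_i = 0` otherwise. -/
theorem stmt14 (d n : ℕ) (hd : 1 ≤ d) (hn : 1 ≤ n)
    (o : Fin d → LinearOrder (LatticePt d n))
    (ho : ∀ (i : Fin d) (x y : LatticePt d n), x.1 i < y.1 i → (o i).lt x y)
    (X : Finset (LatticePt d n)) (hX : X.Nonempty)
    (C : Finset (Fin d)) (hC : C.Nonempty)
    (hdom : ¬ ∃ y : LatticePt d n, ∀ i ∈ C, (o i).lt (@Finset.min' _ (o i) X hX) y) :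
    ∀ x ∈ X, ∀ i : Fin d,
      0 ≤ x.1 i - (if i ∈ C then (@Finset.min' _ (o i) X hX).1 i else 0) ∧
      x.1 i - (if i ∈ C then (@Finset.min' _ (o i) X hX).1 i else 0) < (d : ℝ) / n :=
  stmt14_general d n hn o ho X hX C hdom
end

section
/- If X ⊆ T_n is nonempty and dominant with respect to a nonempty C ⊆ I, then ∑_{i ∈ C} (min_i X)_i > 1 − d/n. -/
/-- If `X ⊆ T_n` is nonempty and dominant with respect to a nonempty `C ⊆ I`,
then `∑_{i ∈ C} (min_i X)_i > 1 − d/n`. -/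
theorem stmt15 (d n : ℕ) (hd : 1 ≤ d) (hn : 1 ≤ n)
    (o : Fin d → LinearOrder (LatticePt d n))
    (ho : ∀ (i : Fin d) (x y : LatticePt d n), x.1 i < y.1 i → (o i).lt x y)
    (X : Finset (LatticePt d n)) (hX : X.Nonempty)
    (C : Finset (Fin d)) (hC : C.Nonempty)
    (hdom : ¬ ∃ y : LatticePt d n, ∀ i ∈ C, (o i).lt (@Finset.min' _ (o i) X hX) y) :
    1 - (d : ℝ) / n < ∑ i ∈ C, (@Finset.min' _ (o i) X hX).1 i := by
  by_contra hle
  push_neg at hle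
  apply hdom
  set m : Fin d → LatticePt d n := fun i => @Finset.min' _ (o i) X hX with hm
  obtain ⟨i0, hi0⟩ := hC
  have hn0 : (0:ℝ) < n := by exact_mod_cast Nat.lt_of_lt_of_le Nat.zero_lt_one hn
  choose k hk using fun i => (m i).2.2.2 i
  have hk0 : ∀ i, (0:ℤ) ≤ k i := by
    intro i
    have h1 : (0:ℝ) ≤ (k i : ℝ) / n := hk i ▸ (m i).2.1 i
    rw [le_div_iff₀ hn0, zero_mul] at h1
    exact_mod_cast h1
  set K : ℤ := (n:ℤ) - (∑ i ∈ C, k i) - C.card with hK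
  have hKcast : (K:ℝ) = (n:ℝ) - ((∑ i ∈ C, k i : ℤ):ℝ) - C.card := by
    rw [hK]; push_cast; ring
  have hsum : ∑ i ∈ C, (m i).1 i = ((∑ i ∈ C, k i : ℤ) : ℝ) / n := by
    rw [Finset.sum_congr rfl fun i _ => hk i]
    push_cast
    rw [Finset.sum_div]
  have hcard : (C.card : ℝ) ≤ d := by
    exact_mod_cast (Finset.card_le_card (Finset.subset_univ C)).trans_eq (by simp)
  have hKnn : (0:ℝ) ≤ (K:ℝ) / n := by
    have h1 : ((∑ i ∈ C, k i : ℤ) : ℝ) / n ≤ 1 - (d:ℝ)/n := hsum ▸ hle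
    have h3 := (div_le_iff₀ hn0).mp h1
    have h4 : (1 - (d:ℝ)/n) * n = (n:ℝ) - d := by field_simp
    have h5 : (0:ℝ) ≤ (K:ℝ) := by rw [hKcast]; linarith
    positivity
  set y : Fin d → ℝ := fun j =>
    if j ∈ C then ((k j + 1 : ℤ) : ℝ) / n + (if j = i0 then (K:ℝ)/n else 0) else 0 with hy
  have hypos : ∀ j ∈ C, (m j).1 j < y j := by
    intro j hj
    rw [hy]
    simp only [hj, if_true, hk j]
    have h2 : (0:ℝ) ≤ if j = i0 then (K:ℝ)/n else 0 := by
      split_ifs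
      · exact hKnn
      · exact le_rfl
    have h3 : (0:ℝ) < 1/n := by positivity
    push_cast
    rw [add_div]
    linarith
  have hynn : ∀ j, 0 ≤ y j := by
    intro j
    rw [hy]
    dsimp only
    split_ifs with h1 h2
    · have := hk0 j
      have ha : (0:ℝ) ≤ ((k j + 1 : ℤ):ℝ)/n := by positivity
      linarith [hKnn]
    · have := hk0 j
      have ha : (0:ℝ) ≤ ((k j + 1 : ℤ):ℝ)/n := by positivity
      linarith
    · exact le_rfl
  have hysum : ∑ j, y j = 1 := by
    rw [hy]
    dsimp only
    rw [Finset.sum_ite_mem, Finset.univ_inter, Finset.sum_add_distrib,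
      Finset.sum_ite_eq' C i0 (fun _ => (K:ℝ)/n)]
    simp only [hi0, if_true]
    rw [← Finset.sum_div, ← add_div]
    rw [div_eq_one_iff_eq (ne_of_gt hn0)]
    push_cast [hK]
    rw [Finset.sum_add_distrib, Finset.sum_const]
    push_cast
    ring
  have hylat : ∀ j, ∃ c : ℤ, y j = (c:ℝ)/n := by
    intro j
    rw [hy]
    dsimp only
    by_cases hj : j ∈ C
    · by_cases hji : j = i0
      · exact ⟨k j + 1 + K, by subst hji; simp [hj]; push_cast; ring⟩
      · exact ⟨k j + 1, by simp [hj, hji]⟩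
    · exact ⟨0, by simp [hj]⟩
  exact ⟨⟨y, hynn, hysum, hylat⟩, fun i hiC => ho i (m i) _ (hypos i hiC)⟩
end

section
/- If X ⊆ T_n is nonempty and dominant with respect to a nonempty C ⊆ I, then |x_i − y_i| < 2d/n for all x, y ∈ X and all i ∈ I. -/
lemma aux_min_le {α : Type*} [LinearOrder α] (f : α → ℝ)
    (hf : ∀ x y : α, f x < f y → x < y) (X : Finset α) (hX : X.Nonempty)
    (x : α) (hx : x ∈ X) : f (X.min' hX) ≤ f x :=
  le_of_not_gt fun h => absurd (hf _ _ h) (not_lt.mpr (X.min'_le x hx))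

/-- If `X ⊆ T_n` is nonempty and dominant with respect to a nonempty `C ⊆ I`,
then `|x_i − y_i| < 2d/n` for all `x, y ∈ X` and all `i ∈ I`. -/
theorem stmt16 (d n : ℕ) (hd : 1 ≤ d) (hn : 1 ≤ n)
    (o : Fin d → LinearOrder (LatticePt d n))
    (ho : ∀ (i : Fin d) (x y : LatticePt d n), x.1 i < y.1 i → (o i).lt x y)
    (X : Finset (LatticePt d n)) (hX : X.Nonempty)
    (C : Finset (Fin d)) (hC : C.Nonempty)
    (hdom : ¬ ∃ y : LatticePt d n, ∀ i ∈ C, (o i).lt (@Finset.min' _ (o i) X hX) y) :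
    ∀ x ∈ X, ∀ y ∈ X, ∀ i : Fin d, |x.1 i - y.1 i| < 2 * (d : ℝ) / n := by
  have hn0 : (0:ℝ) < n := by exact_mod_cast hn
  set a : Fin d → ℝ := fun j => (@Finset.min' _ (o j) X hX).1 j with ha_def
  have ha_le : ∀ j, ∀ z ∈ X, a j ≤ z.1 j := fun j z hz =>
    @aux_min_le _ (o j) (fun w => w.1 j) (ho j) X hX z hz
  have ha_nonneg : ∀ j, 0 ≤ a j := fun j => (@Finset.min' _ (o j) X hX).2.1 j
  -- Key inequality: sum of the coordinate minima over C is big.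
  have hkey : 1 - (C.card : ℝ)/n < ∑ j ∈ C, a j := by
    by_contra hcon
    push_neg at hcon
    choose k hk using fun j => (@Finset.min' _ (o j) X hX).2.2.2 j
    have hk' : ∀ j, a j = (k j : ℝ)/n := hk
    set j0 : Fin d := ⟨0, hd⟩
    set S : ℤ := ∑ j ∈ C, (k j + 1) with hS
    set r : ℝ := 1 - ∑ j ∈ C, (a j + 1/n) with hr
    have hsum_eq : ∑ j ∈ C, (a j + 1/n) = (S:ℝ)/n := by
      rw [hS]
      push_cast
      rw [Finset.sum_div]
      refine Finset.sum_congr rfl fun j hj => ?_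
      rw [hk' j]; ring
    have hsum_eq2 : ∑ j ∈ C, (a j + 1/n) = (∑ j ∈ C, a j) + C.card/n := by
      rw [Finset.sum_add_distrib, Finset.sum_const, nsmul_eq_mul]
      ring
    have hr_nonneg : 0 ≤ r := by
      rw [hr, hsum_eq2]; linarith
    have hr_mult : r = (((n : ℤ) - S : ℤ) : ℝ)/n := by
      rw [hr, hsum_eq]
      push_cast
      field_simp
    set yv : Fin d → ℝ :=
      fun j => (if j ∈ C then a j + 1/n else 0) + (if j = j0 then r else 0) with hyv
    have hy_nonneg : ∀ j, 0 ≤ yv j := by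
      intro j
      have h1 : 0 < 1/(n:ℝ) := by positivity
      dsimp [yv]
      split_ifs <;> first
        | linarith [ha_nonneg j]
        | linarith
    have hy_sum : ∑ j, yv j = 1 := by
      dsimp [yv]
      rw [Finset.sum_add_distrib, Finset.sum_ite_mem, Finset.univ_inter,
        Finset.sum_ite_eq' Finset.univ j0 (fun _ => r), if_pos (Finset.mem_univ j0)]
      rw [hr]; ring
    have hy_mult : ∀ j, ∃ m : ℤ, yv j = (m:ℝ)/n := by
      intro j
      dsimp [yv]
      by_cases h2 : j = j0
      · subst h2
        simp only [if_pos rfl]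
        by_cases h1 : j0 ∈ C <;> simp only [h1, ite_true, ite_false]
        · exact ⟨k j0 + 1 + (n - S), by rw [hk' j0, hr_mult]; push_cast; field_simp⟩
        · rw [zero_add]
          exact ⟨n - S, by rw [hr_mult]⟩
      · simp only [if_neg h2, add_zero]
        by_cases h1 : j ∈ C <;> simp only [h1, ite_true, ite_false]
        · exact ⟨k j + 1, by rw [hk' j]; push_cast; field_simp⟩
        · exact ⟨0, by simp⟩
    refine hdom ⟨⟨yv, hy_nonneg, hy_sum, hy_mult⟩, fun j hj => ho j _ _ ?_⟩
    show a j < yv j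
    have h1 : 0 < 1/(n:ℝ) := by positivity
    dsimp [yv]
    rw [if_pos hj]
    split_ifs <;> linarith
  -- Bounds on coordinates of points of X.
  have hcard : (C.card : ℝ) ≤ d := by
    have : C.card ≤ d := by simpa using C.card_le_univ
    exact_mod_cast this
  have hsub : ∀ z : LatticePt d n, ∑ j ∈ C, z.1 j ≤ 1 := by
    intro z
    calc ∑ j ∈ C, z.1 j ≤ ∑ j, z.1 j :=
          Finset.sum_le_sum_of_subset_of_nonneg (Finset.subset_univ C)
            (fun j _ _ => z.2.1 j)
      _ = 1 := z.2.2.1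
  have bound : ∀ i : Fin d, ∀ z ∈ X,
      (if i ∈ C then a i else 0) ≤ z.1 i ∧
      z.1 i < (if i ∈ C then a i else 0) + (C.card:ℝ)/n := by
    intro i z hz
    by_cases hiC : i ∈ C
    · rw [if_pos hiC]
      refine ⟨ha_le i z hz, ?_⟩
      have h1 : z.1 i + ∑ j ∈ C.erase i, z.1 j = ∑ j ∈ C, z.1 j :=
        Finset.add_sum_erase C (fun j => z.1 j) hiC
      have h2 : ∑ j ∈ C.erase i, a j = (∑ j ∈ C, a j) - a i :=
        Finset.sum_erase_eq_sub hiC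
      have h3 : ∑ j ∈ C.erase i, a j ≤ ∑ j ∈ C.erase i, z.1 j :=
        Finset.sum_le_sum fun j _ => ha_le j z hz
      have h4 := hsub z
      linarith
    · rw [if_neg hiC]
      refine ⟨z.2.1 i, ?_⟩
      have h1 : z.1 i + ∑ j ∈ C, z.1 j = ∑ j ∈ insert i C, z.1 j :=
        (Finset.sum_insert hiC).symm
      have h2 : ∑ j ∈ insert i C, z.1 j ≤ 1 := by
        calc ∑ j ∈ insert i C, z.1 j ≤ ∑ j, z.1 j :=
              Finset.sum_le_sum_of_subset_of_nonneg (Finset.subset_univ _)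
                (fun j _ _ => z.2.1 j)
          _ = 1 := z.2.2.1
      have h3 : ∑ j ∈ C, a j ≤ ∑ j ∈ C, z.1 j :=
        Finset.sum_le_sum fun j _ => ha_le j z hz
      linarith
  intro x hx y hy i
  obtain ⟨hx1, hx2⟩ := bound i x hx
  obtain ⟨hy1, hy2⟩ := bound i y hy
  have hdiv : (C.card:ℝ)/n ≤ (d:ℝ)/n := by gcongr
  have hdn : (0:ℝ) ≤ (d:ℝ)/n := by positivity
  have h2d : 2 * (d:ℝ)/n = (d:ℝ)/n + (d:ℝ)/n := by ring
  rw [abs_sub_lt_iff, h2d]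
  constructor <;> linarith
end
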